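/- The number of involutions of length n avoiding both 132 and 213 equals 2^⌊n/2⌋ for all n ≥ 0. -/

import Mathlib

set_option maxHeartbeats 1600000

def IsInvolution {n : ℕ} (π : Equiv.Perm (Fin n)) : Prop := ∀ i, π (π i) = i

def Avoids132 {n : ℕ} (π : Equiv.Perm (Fin n)) : Prop :=
  ¬ ∃ i j k : Fin n, i < j ∧ j < k ∧ π i < π k ∧ π k < π j

def fixCount {n : ℕ} (π : Equiv.Perm (Fin n)) : ℕ :=
  (Finset.univ.filter fun i => π i = i).card

def Avoids213 {n : ℕ} (π : Equiv.Perm (Fin n)) : Prop :=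
  ¬ ∃ i j k : Fin n, i < j ∧ j < k ∧ π j < π i ∧ π i < π k

def PropP {n : ℕ} (π : Equiv.Perm (Fin n)) : Prop :=
  ∀ i j : Fin n, i < j → π j < π i ∨ (π j : ℕ) = π i + ((j : ℕ) - i)

theorem char {n : ℕ} (π : Equiv.Perm (Fin n)) :
    (Avoids132 π ∧ Avoids213 π) ↔ PropP π := by
  constructor
  · rintro ⟨h132, h213⟩ i j hij
    rcases lt_trichotomy (π j) (π i) with h | h | h
    · exact Or.inl h
    · exact absurd (π.injective h.symm) (ne_of_lt hij)
    · right
      have key : Finset.image π (Finset.Ioo i j) = Finset.Ioo (π i) (π j) := by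
        apply Finset.ext
        intro v
        simp only [Finset.mem_image, Finset.mem_Ioo]
        constructor
        · rintro ⟨m, ⟨him, hmj⟩, rfl⟩
          constructor
          · rcases lt_trichotomy (π i) (π m) with h' | h' | h'
            · exact h'
            · exact absurd (π.injective h').symm (ne_of_lt him).symm
            · exact absurd ⟨i, m, j, him, hmj, h', h⟩ h213
          · rcases lt_trichotomy (π m) (π j) with h' | h' | h'
            · exact h'
            · exact absurd (π.injective h') (ne_of_lt hmj)
            · exact absurd ⟨i, m, j, him, hmj, h, h'⟩ h132
        · rintro ⟨hv1, hv2⟩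
          refine ⟨π.symm v, ⟨?_, ?_⟩, π.apply_symm_apply v⟩
          · rcases lt_trichotomy i (π.symm v) with h' | h' | h'
            · exact h'
            · exfalso
              have : π i = v := by rw [h', π.apply_symm_apply]
              rw [this] at hv1; exact absurd rfl (ne_of_lt hv1)
            · -- π.symm v < i < j, values: π i < v < π j : 213 pattern at (symm v, i, j)
              exfalso
              apply h213
              refine ⟨π.symm v, i, j, h', hij, ?_, ?_⟩ <;>
                rw [π.apply_symm_apply] <;> assumption
          · rcases lt_trichotomy (π.symm v) j with h' | h' | h'
            · exact h'
            · exfalso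
              have : π j = v := by rw [← h', π.apply_symm_apply]
              rw [this] at hv2; exact absurd rfl (ne_of_lt hv2)
            · exfalso
              apply h132
              refine ⟨i, j, π.symm v, hij, h', ?_, ?_⟩ <;>
                rw [π.apply_symm_apply] <;> assumption
      have hc := congrArg Finset.card key
      rw [Finset.card_image_of_injective _ π.injective, Fin.card_Ioo, Fin.card_Ioo] at hc
      have h1 : (i : ℕ) < j := hij
      have h2 : (π i : ℕ) < π j := h
      omega
  · intro hP
    constructor
    · rintro ⟨i, j, k, hij, hjk, h1, h2⟩
      rcases hP i k (hij.trans hjk) with h | h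
      · exact absurd h1 (not_lt.mpr h.le)
      · rcases hP i j hij with h' | h'
        · exact absurd (h2.trans h') (by omega)
        · have hik : (i : ℕ) < k := hij.trans hjk
          have hjk' : (j : ℕ) < k := hjk
          have hij' : (i : ℕ) < j := hij
          have h1' : (π i : ℕ) < π k := h1
          have h2' : (π k : ℕ) < π j := h2
          omega
    · rintro ⟨i, j, k, hij, hjk, h1, h2⟩
      rcases hP i k (hij.trans hjk) with h | h
      · exact absurd h2 (not_lt.mpr h.le)
      · rcases hP j k hjk with h' | h'
        · exact absurd (h2.trans' h1).le (not_le.mpr h')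
        · have hik : (i : ℕ) < k := hij.trans hjk
          have hjk' : (j : ℕ) < k := hjk
          have hij' : (i : ℕ) < j := hij
          have h1' : (π j : ℕ) < π i := h1
          have h2' : (π i : ℕ) < π k := h2
          omega

section E
variable {n m : ℕ}
def efun (hm : 1 ≤ m) (h2m : 2*m ≤ n) (π' : Equiv.Perm (Fin (n - 2*m))) (i : Fin n) : Fin n :=
  if _h1 : (i : ℕ) < m then ⟨(i : ℕ) + (n - m), by omega⟩
  else if _h2 : (i : ℕ) < n - m then
    ⟨(π' ⟨(i : ℕ) - m, by omega⟩ : ℕ) + m, by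
      have := (π' ⟨(i : ℕ) - m, by omega⟩).is_lt; omega⟩
  else ⟨(i : ℕ) - (n - m), by have := i.is_lt; omega⟩
variable (hm : 1 ≤ m) (h2m : 2*m ≤ n) (π' : Equiv.Perm (Fin (n - 2*m)))
lemma efun_lo (i : Fin n) (h1 : (i : ℕ) < m) :
    (efun hm h2m π' i : ℕ) = i + (n - m) := by simp [efun, h1]
lemma efun_mid (i : Fin n) (h1 : m ≤ (i : ℕ)) (h2 : (i : ℕ) < n - m) :
    (efun hm h2m π' i : ℕ) = (π' ⟨(i : ℕ) - m, by omega⟩ : ℕ) + m := by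
  simp [efun, not_lt.mpr h1, h2]
lemma efun_mid' (i : Fin n) (h1 : m ≤ (i : ℕ)) (h2 : (i : ℕ) < n - m)
    (j : Fin (n - 2*m)) (hj : (j : ℕ) = (i : ℕ) - m) :
    (efun hm h2m π' i : ℕ) = (π' j : ℕ) + m := by
  have hjj : j = ⟨(i : ℕ) - m, by omega⟩ := Fin.ext (by simpa using hj)
  rw [hjj]; exact efun_mid hm h2m π' i h1 h2
lemma efun_hi (i : Fin n) (h1 : n - m ≤ (i : ℕ)) :
    (efun hm h2m π' i : ℕ) = i - (n - m) := by
  have : ¬ ((i : ℕ) < m) := by omega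
  simp [efun, this, not_lt.mpr h1]
lemma efun_invol (hπ' : IsInvolution π') : Function.Involutive (efun hm h2m π') := by
  intro i
  have hin : (i : ℕ) < n := i.is_lt
  rcases lt_or_ge (i : ℕ) m with h1 | h1
  · have e1 : (efun hm h2m π' i : ℕ) = i + (n - m) := efun_lo hm h2m π' i h1
    have e2 : (efun hm h2m π' (efun hm h2m π' i) : ℕ) = (efun hm h2m π' i : ℕ) - (n - m) :=
      efun_hi hm h2m π' _ (by omega)
    apply Fin.ext; omega
  rcases lt_or_ge (i : ℕ) (n - m) with h2 | h2
  · have e1 : (efun hm h2m π' i : ℕ) = (π' ⟨(i : ℕ) - m, by omega⟩ : ℕ) + m :=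
      efun_mid hm h2m π' i h1 h2
    have hb := (π' ⟨(i : ℕ) - m, by omega⟩).is_lt
    have e2 : (efun hm h2m π' (efun hm h2m π' i) : ℕ) =
        (π' ⟨(efun hm h2m π' i : ℕ) - m, by omega⟩ : ℕ) + m :=
      efun_mid hm h2m π' _ (by omega) (by omega)
    have harg : (⟨(efun hm h2m π' i : ℕ) - m, by omega⟩ : Fin (n - 2*m)) =
        π' ⟨(i : ℕ) - m, by omega⟩ := by apply Fin.ext; simp; omega
    rw [harg, hπ'] at e2
    apply Fin.ext; simp at e2 ⊢; omega
  · have e1 : (efun hm h2m π' i : ℕ) = i - (n - m) := efun_hi hm h2m π' i h2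
    have e2 : (efun hm h2m π' (efun hm h2m π' i) : ℕ) = (efun hm h2m π' i : ℕ) + (n - m) :=
      efun_lo hm h2m π' _ (by omega)
    apply Fin.ext; omega

noncomputable def eperm (hπ' : IsInvolution π') : Equiv.Perm (Fin n) :=
  Function.Involutive.toPerm _ (efun_invol hm h2m π' hπ')
lemma eperm_apply (hπ' : IsInvolution π') (i : Fin n) :
    eperm hm h2m π' hπ' i = efun hm h2m π' i := rfl

lemma eperm_invol (hπ' : IsInvolution π') : IsInvolution (eperm hm h2m π' hπ') :=
  fun i => efun_invol hm h2m π' hπ' i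

lemma eperm_propP (hπ' : IsInvolution π') (hP : PropP π') : PropP (eperm hm h2m π' hπ') := by
  intro i j hij
  have hij' : (i : ℕ) < (j : ℕ) := hij
  have hin : (i : ℕ) < n := i.is_lt
  have hjn : (j : ℕ) < n := j.is_lt
  rw [eperm_apply, eperm_apply]
  rcases lt_or_ge (i : ℕ) m with hi1 | hi1
  · have ei : (efun hm h2m π' i : ℕ) = i + (n - m) := efun_lo hm h2m π' i hi1
    rcases lt_or_ge (j : ℕ) m with hj1 | hj1
    · have ej : (efun hm h2m π' j : ℕ) = j + (n - m) := efun_lo hm h2m π' j hj1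
      right; omega
    rcases lt_or_ge (j : ℕ) (n - m) with hj2 | hj2
    · have ej := efun_mid hm h2m π' j hj1 hj2
      have hb := (π' ⟨(j : ℕ) - m, by omega⟩).is_lt
      left; rw [Fin.lt_def]; omega
    · have ej : (efun hm h2m π' j : ℕ) = j - (n - m) := efun_hi hm h2m π' j hj2
      left; rw [Fin.lt_def]; omega
  rcases lt_or_ge (i : ℕ) (n - m) with hi2 | hi2
  · have ei := efun_mid hm h2m π' i hi1 hi2
    have hbi := (π' ⟨(i : ℕ) - m, by omega⟩).is_lt
    rcases lt_or_ge (j : ℕ) (n - m) with hj2 | hj2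
    · have ej := efun_mid hm h2m π' j (by omega) hj2
      have hbj := (π' ⟨(j : ℕ) - m, by omega⟩).is_lt
      have := hP ⟨(i : ℕ) - m, by omega⟩ ⟨(j : ℕ) - m, by omega⟩ (by rw [Fin.mk_lt_mk]; omega)
      rcases this with h | h
      · left; rw [Fin.lt_def]; rw [Fin.lt_def] at h; omega
      · right; simp only [Fin.val_mk] at h; omega
    · have ej : (efun hm h2m π' j : ℕ) = j - (n - m) := efun_hi hm h2m π' j hj2
      left; rw [Fin.lt_def]; omega
  · have ei : (efun hm h2m π' i : ℕ) = i - (n - m) := efun_hi hm h2m π' i hi2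
    have ej : (efun hm h2m π' j : ℕ) = j - (n - m) := efun_hi hm h2m π' j (by omega)
    right; omega
end E

section D
variable {n m : ℕ}

def dfun (π : Equiv.Perm (Fin n)) (h2m : 2*m ≤ n)
    (hmid : ∀ i : Fin n, m ≤ (i : ℕ) → (i : ℕ) < n - m →
      m ≤ (π i : ℕ) ∧ (π i : ℕ) < n - m) (i : Fin (n - 2*m)) : Fin (n - 2*m) :=
  ⟨(π ⟨(i : ℕ) + m, by have := i.is_lt; omega⟩ : ℕ) - m, by
    have := hmid ⟨(i : ℕ) + m, by have := i.is_lt; omega⟩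
      (by simp) (by have := i.is_lt; simp; omega)
    omega⟩

variable (π : Equiv.Perm (Fin n)) (h2m : 2*m ≤ n)
    (hmid : ∀ i : Fin n, m ≤ (i : ℕ) → (i : ℕ) < n - m →
      m ≤ (π i : ℕ) ∧ (π i : ℕ) < n - m)

lemma dfun_val (i : Fin (n - 2*m)) :
    (dfun π h2m hmid i : ℕ) = (π ⟨(i : ℕ) + m, by have := i.is_lt; omega⟩ : ℕ) - m := rfl

lemma dfun_val' (i : Fin (n - 2*m)) (j : Fin n) (hj : (j : ℕ) = (i : ℕ) + m) :
    (dfun π h2m hmid i : ℕ) = (π j : ℕ) - m := by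
  have hjj : j = ⟨(i : ℕ) + m, by have := i.is_lt; omega⟩ := Fin.ext (by simpa using hj)
  rw [hjj]; rfl

lemma dfun_invol (hinv : IsInvolution π) : Function.Involutive (dfun π h2m hmid) := by
  intro i
  have hlt := i.is_lt
  have hej := hmid ⟨(i : ℕ) + m, by omega⟩ (by simp) (by simp; omega)
  apply Fin.ext
  rw [dfun_val]
  have hblt := (dfun π h2m hmid i).is_lt
  have harg : (⟨(dfun π h2m hmid i : ℕ) + m, by omega⟩ : Fin n) = π ⟨(i : ℕ) + m, by omega⟩ := by
    apply Fin.ext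
    have := dfun_val' π h2m hmid i ⟨(i : ℕ) + m, by omega⟩ (by simp)
    simp only [Fin.val_mk]
    omega
  have h2 := congrArg π harg
  rw [hinv] at h2
  have h3 := congrArg Fin.val h2
  simp only [Fin.val_mk] at h3
  omega

noncomputable def dperm (hinv : IsInvolution π) : Equiv.Perm (Fin (n - 2*m)) :=
  Function.Involutive.toPerm _ (dfun_invol π h2m hmid hinv)

lemma dperm_val' (hinv : IsInvolution π) (i : Fin (n - 2*m)) (j : Fin n)
    (hj : (j : ℕ) = (i : ℕ) + m) :
    (dperm π h2m hmid hinv i : ℕ) = (π j : ℕ) - m := dfun_val' π h2m hmid i j hj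

lemma dperm_invol (hinv : IsInvolution π) : IsInvolution (dperm π h2m hmid hinv) :=
  fun i => dfun_invol π h2m hmid hinv i

lemma dperm_propP (hinv : IsInvolution π) (hP : PropP π) : PropP (dperm π h2m hmid hinv) := by
  intro i j hij
  have hij' : (i : ℕ) < (j : ℕ) := hij
  have hin := i.is_lt
  have hjn := j.is_lt
  have heI := hmid ⟨(i : ℕ) + m, by omega⟩ (by simp) (by simp; omega)
  have heJ := hmid ⟨(j : ℕ) + m, by omega⟩ (by simp) (by simp; omega)
  have hvI := dperm_val' π h2m hmid hinv i ⟨(i : ℕ) + m, by omega⟩ (by simp)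
  have hvJ := dperm_val' π h2m hmid hinv j ⟨(j : ℕ) + m, by omega⟩ (by simp)
  have := hP ⟨(i : ℕ) + m, by omega⟩ ⟨(j : ℕ) + m, by omega⟩ (by rw [Fin.mk_lt_mk]; omega)
  rcases this with h | h
  · left; rw [Fin.lt_def] at h ⊢; omega
  · right; simp only [Fin.val_mk] at h ⊢; omega
end D

lemma id_of_fix_last {n : ℕ} (π : Equiv.Perm (Fin n)) (hP : PropP π) (hn : 0 < n)
    (h : π ⟨n-1, by omega⟩ = ⟨n-1, by omega⟩) : π = 1 := by
  ext i
  rcases eq_or_lt_of_le (show (i : ℕ) ≤ n - 1 by have := i.is_lt; omega) with h' | h'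
  · have : i = ⟨n-1, by omega⟩ := Fin.ext h'
    rw [this, h]; simp
  · have := hP i ⟨n-1, by omega⟩ (by rw [Fin.lt_def]; exact h')
    rw [h] at this
    have hlt := (π i).is_lt
    rcases this with hl | hl
    · rw [Fin.lt_def] at hl
      simp only [Fin.val_mk] at hl; omega
    · simp only [Fin.val_mk] at hl
      simp only [Equiv.Perm.coe_one, id_eq]
      omega

lemma decomp {n : ℕ} (π : Equiv.Perm (Fin n)) (hinv : IsInvolution π) (hP : PropP π)
    (hne : π ≠ 1) :
    ∃ (u : ℕ) (hm : 1 ≤ u + 1) (h2m : 2*(u+1) ≤ n) (π' : Equiv.Perm (Fin (n - 2*(u+1))))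
      (hπ' : IsInvolution π') (_ : PropP π'),
      π = eperm hm h2m π' hπ' ∧ ∀ L : Fin n, (L : ℕ) = n - 1 → (π L : ℕ) = u := by
  have hn : 0 < n := by
    rcases Nat.eq_zero_or_pos n with h | h
    · exfalso; apply hne; subst h; ext i; exact absurd i.is_lt (by omega)
    · exact h
  obtain ⟨u, hu⟩ : ∃ u, (π ⟨n-1, by omega⟩ : ℕ) = u := ⟨_, rfl⟩
  have hu1 : u < n - 1 := by
    rcases eq_or_lt_of_le (show u ≤ n - 1 by have := (π ⟨n-1, by omega⟩).is_lt; omega) with h | h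
    · exfalso; apply hne; apply id_of_fix_last π hP hn
      apply Fin.ext; rw [hu, h]
    · exact h
  have hun : u < n := by omega
  have hpL : π ⟨n-1, by omega⟩ = ⟨u, hun⟩ := Fin.ext (by simpa using hu)
  have hLp : π ⟨u, hun⟩ = ⟨n-1, by omega⟩ := by
    have h2 := congrArg π hpL
    rw [hinv] at h2
    exact h2.symm
  -- (c)
  have hc : ∀ i : Fin n, (i : ℕ) < u + 1 → (π i : ℕ) = i + (n - (u+1)) := by
    intro i hi
    rcases eq_or_lt_of_le (show (i : ℕ) ≤ u by omega) with h | h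
    · have hieq : i = ⟨u, hun⟩ := Fin.ext h
      rw [hieq, hLp]; simp; omega
    · have := hP i ⟨u, hun⟩ (by rw [Fin.lt_def]; exact h)
      rw [hLp] at this
      have hlt := (π i).is_lt
      rcases this with hl | hl
      · rw [Fin.lt_def] at hl
        simp only [Fin.val_mk] at hl; omega
      · simp only [Fin.val_mk] at hl; omega
  have h2m : 2*(u+1) ≤ n := by
    by_contra hcon
    have h0 : (π ⟨0, hn⟩ : ℕ) = n - (u+1) := by
      have := hc ⟨0, hn⟩ (by simp); simpa using this
    have h1 : (π ⟨n - (u+1), by omega⟩ : ℕ) = (n - (u+1)) + (n - (u+1)) := by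
      have := hc ⟨n - (u+1), by omega⟩ (by simp; omega); simpa using this
    have he0 : π ⟨0, hn⟩ = ⟨n - (u+1), by omega⟩ := Fin.ext (by simpa using h0)
    have h3 := congrArg π he0
    have h4 := hinv ⟨0, hn⟩
    have h2 : π ⟨n - (u+1), by omega⟩ = ⟨0, hn⟩ := (h3.symm.trans h4)
    have h5 := congrArg Fin.val h2
    simp only [Fin.val_mk] at h5
    omega
  -- (d)
  have hd : ∀ i : Fin n, n - (u+1) ≤ (i : ℕ) → (π i : ℕ) = i - (n - (u+1)) := by
    intro i hi
    have hin := i.is_lt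
    have hpj : π ⟨(i : ℕ) - (n - (u+1)), by omega⟩ = i := by
      apply Fin.ext
      have := hc ⟨(i : ℕ) - (n - (u+1)), by omega⟩ (by simp; omega)
      simp only [Fin.val_mk] at this ⊢; omega
    have h3 := congrArg π hpj
    have h4 := hinv ⟨(i : ℕ) - (n - (u+1)), by omega⟩
    have h5 := congrArg Fin.val (h3.symm.trans h4)
    simp only [Fin.val_mk] at h5
    omega
  -- (e)
  have he : ∀ i : Fin n, u + 1 ≤ (i : ℕ) → (i : ℕ) < n - (u+1) →
      u + 1 ≤ (π i : ℕ) ∧ (π i : ℕ) < n - (u+1) := by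
    intro i h1 h2
    constructor
    · by_contra hcon
      have := hc (π i) (by omega)
      rw [hinv] at this
      omega
    · by_contra hcon
      have := hd (π i) (by omega)
      rw [hinv] at this
      have := (π i).is_lt
      omega
  refine ⟨u, by omega, h2m, dperm π h2m he hinv, dperm_invol π h2m he hinv,
    dperm_propP π h2m he hinv hP, ?_, ?_⟩
  · ext i
    have hin := i.is_lt
    rw [eperm_apply]
    rcases lt_or_ge (i : ℕ) (u+1) with h1 | h1
    · rw [efun_lo _ _ _ _ h1, hc i h1]
    rcases lt_or_ge (i : ℕ) (n - (u+1)) with h2 | h2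
    · have hei := he i h1 h2
      rw [efun_mid' _ _ _ _ h1 h2 ⟨(i : ℕ) - (u+1), by omega⟩ (by simp)]
      have := dperm_val' π h2m he hinv ⟨(i : ℕ) - (u+1), by omega⟩ i (by simp; omega)
      omega
    · rw [efun_hi _ _ _ _ h2, hd i h2]
  · intro L hL
    have : L = ⟨n-1, by omega⟩ := Fin.ext (by simpa using hL)
    rw [this, hu]

section Count

instance {n : ℕ} (π : Equiv.Perm (Fin n)) : Decidable (IsInvolution π) :=
  decidable_of_iff (∀ i, π (π i) = i) Iff.rfl

instance {n : ℕ} (π : Equiv.Perm (Fin n)) : Decidable (Avoids132 π) :=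
  decidable_of_iff (¬ ∃ i j k : Fin n, i < j ∧ j < k ∧ π i < π k ∧ π k < π j) Iff.rfl

instance {n : ℕ} (π : Equiv.Perm (Fin n)) : Decidable (Avoids213 π) :=
  decidable_of_iff (¬ ∃ i j k : Fin n, i < j ∧ j < k ∧ π j < π i ∧ π i < π k) Iff.rfl

abbrev Good (n : ℕ) := {π : Equiv.Perm (Fin n) // IsInvolution π ∧ Avoids132 π ∧ Avoids213 π}

lemma one_propP (n : ℕ) : PropP (1 : Equiv.Perm (Fin n)) := by
  intro i j hij
  right
  have : (i : ℕ) < j := hij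
  simp only [Equiv.Perm.coe_one, id_eq]
  omega

lemma one_good (n : ℕ) :
    IsInvolution (1 : Equiv.Perm (Fin n)) ∧ Avoids132 (1 : Equiv.Perm (Fin n)) ∧
      Avoids213 (1 : Equiv.Perm (Fin n)) :=
  ⟨fun _ => rfl, (char 1).mpr (one_propP n)⟩

lemma eperm_last {n m : ℕ} (hm : 1 ≤ m) (h2m : 2*m ≤ n) (π' : Equiv.Perm (Fin (n - 2*m)))
    (hπ' : IsInvolution π') (L : Fin n) (hL : (L : ℕ) = n - 1) :
    (eperm hm h2m π' hπ' L : ℕ) = m - 1 := by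
  rw [eperm_apply, efun_hi _ _ _ _ (by omega)]
  omega

noncomputable def F (n : ℕ) :
    Option ((m' : Fin (n/2)) × Good (n - 2*((m' : ℕ)+1))) → Good n
  | none => ⟨1, one_good n⟩
  | some ⟨m', σ⟩ =>
      ⟨eperm (Nat.le_add_left 1 _) (by have := m'.is_lt; omega) σ.1 σ.2.1,
        eperm_invol _ _ _ σ.2.1,
        (char _).mpr (eperm_propP _ _ _ σ.2.1 ((char σ.1).mp σ.2.2))⟩

lemma F_bij (n : ℕ) : Function.Bijective (F n) := by
  constructor
  · intro a b hab
    rcases a with _ | ⟨m1, σ1⟩ <;> rcases b with _ | ⟨m2, σ2⟩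
    · rfl
    · exfalso
      have hn : 2 ≤ n := by have := m2.is_lt; omega
      have hval := congrArg (fun x : Good n => (x.1 ⟨n-1, by omega⟩ : ℕ)) hab
      simp only [F] at hval
      rw [eperm_last _ _ _ _ ⟨n-1, by omega⟩ (by simp)] at hval
      simp only [Equiv.Perm.coe_one, id_eq, Fin.val_mk] at hval
      have := m2.is_lt
      omega
    · exfalso
      have hn : 2 ≤ n := by have := m1.is_lt; omega
      have hval := congrArg (fun x : Good n => (x.1 ⟨n-1, by omega⟩ : ℕ)) hab
      simp only [F] at hval
      rw [eperm_last _ _ _ _ ⟨n-1, by omega⟩ (by simp)] at hval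
      simp only [Equiv.Perm.coe_one, id_eq, Fin.val_mk] at hval
      have := m1.is_lt
      omega
    · have hn : 2 ≤ n := by have := m1.is_lt; omega
      have hE : (F n (some ⟨m1, σ1⟩)).1 = (F n (some ⟨m2, σ2⟩)).1 := by rw [hab]
      simp only [F] at hE
      have hm12 : m1 = m2 := by
        have hval := congrArg (fun x : Equiv.Perm (Fin n) => (x ⟨n-1, by omega⟩ : ℕ)) hE
        rw [eperm_last _ _ _ _ ⟨n-1, by omega⟩ (by simp),
            eperm_last _ _ _ _ ⟨n-1, by omega⟩ (by simp)] at hval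
        exact Fin.ext (by omega)
      subst hm12
      have hσ : σ1 = σ2 := by
        apply Subtype.ext
        apply Equiv.ext
        intro i
        have hilt := i.is_lt
        have hm1 := m1.is_lt
        have hI := Equiv.ext_iff.mp hE ⟨(i : ℕ) + ((m1 : ℕ) + 1), by omega⟩
        have hv := congrArg Fin.val hI
        rw [eperm_apply, eperm_apply,
            efun_mid' _ _ _ _ (by simp) (by simp; omega) i (by simp),
            efun_mid' _ _ _ _ (by simp) (by simp; omega) i (by simp)] at hv
        exact Fin.ext (by omega)
      rw [hσ]
  · intro x
    obtain ⟨π, hgood⟩ := x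
    have hinv : IsInvolution π := hgood.1
    have hP : PropP π := (char π).mp hgood.2
    by_cases hone : π = 1
    · exact ⟨none, by apply Subtype.ext; simp only [F]; exact hone.symm⟩
    · obtain ⟨u, hm, h2m, π', hπ', hπ'P, heq, _⟩ := decomp π hinv hP hone
      have hult : u < n / 2 := by omega
      refine ⟨some ⟨⟨u, hult⟩, ⟨π', hπ', (char π').mpr hπ'P⟩⟩, ?_⟩
      apply Subtype.ext
      simp only [F]
      exact heq.symm

lemma sum_pow (K : ℕ) : (∑ m' : Fin K, 2^(K - ((m' : ℕ)+1))) + 1 = 2^K := by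
  induction K with
  | zero => simp
  | succ K ih =>
    rw [Fin.sum_univ_succ]
    have hcong : ∀ i : Fin K, (2:ℕ)^(K + 1 - ((i.succ : ℕ)+1)) = 2^(K - ((i : ℕ)+1)) := by
      intro i; congr 1; simp [Fin.val_succ]
    rw [Finset.sum_congr rfl fun i _ => hcong i]
    have h0 : (2:ℕ)^(K + 1 - (((0 : Fin (K+1)) : ℕ)+1)) = 2^K := by norm_num
    rw [h0, pow_succ]
    omega

theorem count_good (n : ℕ) : Nat.card (Good n) = 2 ^ (n / 2) := by
  induction n using Nat.strong_induction_on with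
  | _ n ih =>
    rw [← Nat.card_eq_of_bijective (F n) (F_bij n), Finite.card_option,
        Nat.card_eq_fintype_card, Fintype.card_sigma]
    have hcong : ∀ m' : Fin (n/2),
        Fintype.card (Good (n - 2*((m' : ℕ)+1))) = 2 ^ (n/2 - ((m' : ℕ)+1)) := by
      intro m'
      have hlt := m'.is_lt
      rw [← Nat.card_eq_fintype_card, ih _ (by omega)]
      congr 1
      omega
    rw [Finset.sum_congr rfl fun m' _ => hcong m']
    exact sum_pow (n/2)

end Count

theorem stmt7 (n : ℕ) :
    Nat.card {π : Equiv.Perm (Fin n) // IsInvolution π ∧ Avoids132 π ∧ Avoids213 π} =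
      2 ^ (n / 2) := count_good n
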